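/- arXiv:1703.02027 — 2 statements merged into one kernel-verified Lean document; each statement's English description precedes it below -/
import Mathlib

section
/- The Laurent polynomial ρ_C defined below is divisible by the Vandermonde product Π_{1 ≤ i < j ≤ k} (z_j − z_i) in A[z_1^{±1},...,z_k^{±1}]. Consequently, every generator z_1^{n_1} * ... * z_1^{n_k} of the small universal shuffle algebra associated to curves is a Laurent polynomial in z_1,...,z_k with coefficients in A (polynomial in the Δ_{ij}), invariant under the simultaneous S(k)-action on the variables and the coefficients. -/
/-!
A Laurent polynomial `f` is divisible by `z_j - z_i` as soon as it vanishes under the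
substitution `z_i ↦ z_j`, and each `z_b - z_a` (`a ≠ b`) is a non-zero-divisor: it is a monomial
unit times `z_b z_a⁻¹ - 1`, and a translate-invariant finitely supported function on a
torsion-free group is `0`. The substitution for one pair turns every other Vandermonde factor into
some `z_{b'} - z_{a'}` with `a' ≠ b'`, so divisibility by the whole product follows one factor at a
time.

So it suffices that `ρ_C` vanishes under `z_i ↦ z_j` for `i < j`. Pair `σ` with `σ s_{ij}`. After
the substitution, the term of `σ s_{ij}` is minus the image of the term of `σ` under `s_{ij}`
acting on the coefficients: reordering the pair factors costs `sign s_{ij} = -1`, and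
`Δ_{s(a)s(b)} = s • Δ_{ab}`. The term of `σ` is a multiple of `Δ_{ij}`, because its `(i, j)` factor
becomes `±Δ_{ij} z_j`, and `Δ_{ij}` annihilates `x - s_{ij} • x`; so the two terms cancel.
-/

noncomputable section

open Finset

/-- The Laurent monomial `z_i^m` in the Laurent polynomial ring
`A[z_1^{±1},...,z_k^{±1}] = AddMonoidAlgebra A (Fin k →₀ ℤ)`. -/
def zmon {k : ℕ} {A : Type*} [CommRing A] (i : Fin k) (m : ℤ) :
    AddMonoidAlgebra A (Fin k →₀ ℤ) :=
  AddMonoidAlgebra.single (Finsupp.single i m) 1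

/-- A constant `c ∈ A`, viewed as a Laurent polynomial. -/
def cst {k : ℕ} {A : Type*} [CommRing A] (c : A) :
    AddMonoidAlgebra A (Fin k →₀ ℤ) :=
  AddMonoidAlgebra.single (0 : Fin k →₀ ℤ) c

/-- The Laurent polynomial
`ρ_C = Σ_{σ ∈ S(k)} z_1^{n_{σ(1)}} ⋯ z_k^{n_{σ(k)}} · Π_{1 ≤ i < j ≤ k} c_{ij}^σ`,
where `c_{ij}^σ = (z_j − z_i) + Δ_{ij} z_i` if `σ(i) < σ(j)` and
`c_{ij}^σ = (z_j − z_i) − Δ_{ij} z_j` if `σ(i) > σ(j)`. -/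
def rhoCurve {k : ℕ} {A : Type*} [CommRing A]
    (Δ : Fin k → Fin k → A) (n : Fin k → ℤ) :
    AddMonoidAlgebra A (Fin k →₀ ℤ) :=
  ∑ σ : Equiv.Perm (Fin k),
    (∏ i : Fin k, zmon i (n (σ i))) *
      ∏ p ∈ Finset.univ.filter (fun p : Fin k × Fin k => p.1 < p.2),
        (if σ p.1 < σ p.2 then
            (zmon p.2 1 - zmon p.1 1) + cst (Δ p.1 p.2) * zmon p.1 1
          else
            (zmon p.2 1 - zmon p.1 1) - cst (Δ p.1 p.2) * zmon p.2 1)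
open AddMonoidAlgebra

theorem AddMonoidAlgebra.eq_zero_of_single_sub_one_mul_eq_zero {R G : Type*} [Ring R]
    [AddCommGroup G] [IsAddTorsionFree G] {g : G} (hg : g ≠ 0) {y : AddMonoidAlgebra R G}
    (h : (single g 1 - 1) * y = 0) : y = 0 := by
  have hfix : ∀ x, y.coeff (x - g) = y.coeff x := fun x => by
    rw [sub_mul, one_mul, sub_eq_zero] at h
    simpa [coeff_single_mul_apply, neg_add_eq_sub] using congrArg (·.coeff x) h
  have horbit : ∀ x (n : ℕ), y.coeff (x - n • g) = y.coeff x := fun x n => by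
    induction n with
    | zero => simp
    | succ n ih => rw [succ_nsmul, ← sub_sub, hfix, ih]
  by_contra hy
  obtain ⟨x, hx⟩ : ∃ x, y.coeff x ≠ 0 := by
    by_contra! h0
    exact hy (coeff_injective (Finsupp.ext h0))
  have hinj : Function.Injective fun n : ℕ => x - n • g :=
    sub_right_injective.comp
      (injective_nsmul_iff_not_isOfFinAddOrder.mpr (not_isOfFinAddOrder_of_isAddTorsionFree hg))
  refine Set.infinite_of_injective_forall_mem (s := (y.coeff.support : Set G)) hinj
    (fun n => ?_) y.coeff.support.finite_toSet
  simpa [horbit] using hx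

theorem Finset.prod_filter_fst_lt_snd {ι M : Type*} [Fintype ι] [LinearOrder ι]
    [LocallyFiniteOrderTop ι] [CommMonoid M] (f : ι × ι → M) :
    ∏ p ∈ univ.filter (fun p : ι × ι => p.1 < p.2), f p = ∏ a, ∏ b ∈ Ioi a, f (a, b) := by
  rw [prod_filter, Fintype.prod_prod_type]
  refine prod_congr rfl fun a _ => ?_
  rw [← prod_filter]
  congr 1
  ext b
  simp

section LaurentVandermonde

variable {k : ℕ} {A : Type*} [CommRing A]

local notation "𝓛" => AddMonoidAlgebra A (Fin k →₀ ℤ)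

def rename (f : Fin k → Fin k) : 𝓛 →+* 𝓛 :=
  mapDomainRingHom A (Finsupp.mapDomain.addMonoidHom f)

lemma rename_zmon (f : Fin k → Fin k) (l : Fin k) (m : ℤ) :
    rename f (zmon l m : 𝓛) = zmon (f l) m := by
  simp [rename, zmon]

lemma rename_cst (f : Fin k → Fin k) (c : A) : rename f (cst c : 𝓛) = cst c := by
  simp [rename, cst]

lemma zmon_mul_zmon (l : Fin k) (m m' : ℤ) : (zmon l m * zmon l m' : 𝓛) = zmon l (m + m') := by
  simp [zmon, single_mul_single]

lemma zmon_zero (l : Fin k) : (zmon l 0 : 𝓛) = 1 := by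
  simp [zmon, one_def]

/-- Modulo `z_j - z_i` the substitution `z_i ↦ z_j` is the identity: both ring maps agree on
constants and on the variables. -/
lemma sub_rename_mem_span (i j : Fin k) (f : 𝓛) :
    f - rename (Function.update id i j) f ∈ Ideal.span {zmon j 1 - zmon i 1} := by
  rw [← Ideal.Quotient.eq]
  change (Ideal.Quotient.mk _).comp (RingHom.id _) f =
    ((Ideal.Quotient.mk _).comp (rename (Function.update id i j))) f
  congr 1
  ext : 1
  · ext; simp [rename]
  · ext l
    change Ideal.Quotient.mk _ (zmon l 1) =
      Ideal.Quotient.mk _ (rename (Function.update id i j) (zmon l 1))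
    rw [rename_zmon]
    rcases eq_or_ne l i with rfl | hl
    · rw [Function.update_self, Ideal.Quotient.eq]
      exact Ideal.mem_span_singleton.mpr ⟨-1, by ring⟩
    · simp [hl]

lemma zmon_sub_zmon_dvd_of_rename_eq_zero {i j : Fin k} {f : 𝓛}
    (hf : rename (Function.update id i j) f = 0) : zmon j 1 - zmon i 1 ∣ f := by
  simpa [hf, Ideal.mem_span_singleton] using sub_rename_mem_span i j f

lemma eq_zero_of_zmon_sub_zmon_mul_eq_zero {a b : Fin k} (hab : a ≠ b) {y : 𝓛}
    (h : (zmon b 1 - zmon a 1) * y = 0) : y = 0 := by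
  have hfactor : (zmon b 1 - zmon a 1 : 𝓛) =
      zmon a 1 * (single (Finsupp.single b 1 - Finsupp.single a 1) 1 - 1) := by
    rw [mul_sub, mul_one, zmon, zmon, single_mul_single, one_mul, add_sub_cancel]
  have hne : Finsupp.single b (1 : ℤ) - Finsupp.single a 1 ≠ 0 := by
    rw [sub_ne_zero]
    exact fun h => hab (Finsupp.single_left_injective one_ne_zero h).symm
  refine eq_zero_of_single_sub_one_mul_eq_zero hne ?_
  calc _ = zmon a (-1) * ((zmon b 1 - zmon a 1) * y) := by
        rw [hfactor, ← mul_assoc, ← mul_assoc, zmon_mul_zmon, neg_add_cancel, zmon_zero, one_mul]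
    _ = 0 := by rw [h, mul_zero]

lemma update_id_ne_update_id {i j a b : Fin k} (hij : i < j) (hab : a < b)
    (hne : (a, b) ≠ (i, j)) : Function.update id i j a ≠ Function.update id i j b := by
  simp only [Function.update_apply, id, ne_eq, Prod.mk.injEq] at *
  grind

theorem prod_dvd_of_rename_eq_zero (S : Finset (Fin k × Fin k)) (hS : ∀ p ∈ S, p.1 < p.2)
    (f : 𝓛) (hf : ∀ p ∈ S, rename (Function.update id p.1 p.2) f = 0) :
    ∏ p ∈ S, (zmon p.2 1 - zmon p.1 1) ∣ f := by
  classical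
  induction S using Finset.induction_on generalizing f with
  | empty => simp
  | @insert p S hp ih =>
    obtain ⟨q, rfl⟩ := zmon_sub_zmon_dvd_of_rename_eq_zero (hf p (mem_insert_self p S))
    rw [prod_insert hp]
    refine mul_dvd_mul_left _ (ih (fun p' hp' => hS p' (mem_insert_of_mem hp')) q fun p' hp' => ?_)
    have hzero := hf p' (mem_insert_of_mem hp')
    rw [map_mul, map_sub, rename_zmon, rename_zmon] at hzero
    refine eq_zero_of_zmon_sub_zmon_mul_eq_zero ?_ hzero
    exact update_id_ne_update_id (hS p' (mem_insert_of_mem hp')) (hS p (mem_insert_self p S))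
      fun h => hp (Prod.ext_iff.mpr (Prod.mk.inj h) ▸ hp')

/-- The factor `c_{ab}^σ`, extended by `0` on the diagonal so that it is antisymmetric in `a, b`
(`pairFactor_swap`), as the reindexing `Equiv.Perm.prod_Ioi_comp_eq_sign_mul_prod` requires. -/
def pairFactor (Δ : Fin k → Fin k → A) (σ : Equiv.Perm (Fin k)) (a b : Fin k) : 𝓛 :=
  if σ a < σ b then (zmon b 1 - zmon a 1) + cst (Δ a b) * zmon a 1
  else if σ b < σ a then (zmon b 1 - zmon a 1) - cst (Δ a b) * zmon b 1
  else 0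

def rhoTerm (Δ : Fin k → Fin k → A) (n : Fin k → ℤ) (σ : Equiv.Perm (Fin k)) : 𝓛 :=
  (∏ l, zmon l (n (σ l))) * ∏ a, ∏ b ∈ Ioi a, pairFactor Δ σ a b

lemma rhoCurve_eq_sum_rhoTerm (Δ : Fin k → Fin k → A) (n : Fin k → ℤ) :
    rhoCurve Δ n = ∑ σ, rhoTerm Δ n σ := by
  refine sum_congr rfl fun σ _ => ?_
  rw [rhoTerm, prod_filter_fst_lt_snd]
  refine congrArg _ (prod_congr rfl fun a _ => prod_congr rfl fun b hb => ?_)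
  have hne : σ b ≠ σ a := σ.injective.ne (mem_Ioi.mp hb).ne'
  unfold pairFactor
  split_ifs <;> first | rfl | order

lemma pairFactor_swap (Δ : Fin k → Fin k → A) (hΔsym : ∀ i j : Fin k, i ≠ j → Δ i j = Δ j i)
    (σ : Equiv.Perm (Fin k)) (a b : Fin k) : pairFactor Δ σ a b = -pairFactor Δ σ b a := by
  rcases eq_or_ne a b with rfl | hab
  · simp [pairFactor]
  unfold pairFactor
  rw [hΔsym a b hab]
  split_ifs <;> first | order | ring

lemma update_id_swap (i j x : Fin k) :
    Function.update id i j (Equiv.swap i j x) = Function.update id i j x := by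
  rcases eq_or_ne x i with rfl | hxi
  · simp [Function.update_apply]
  rcases eq_or_ne x j with rfl | hxj
  · simp [hxi]
  · rw [Equiv.swap_apply_of_ne_of_ne hxi hxj]

lemma cst_dvd_rename_rhoTerm (Δ : Fin k → Fin k → A) (n : Fin k → ℤ) (σ : Equiv.Perm (Fin k))
    {i j : Fin k} (hij : i < j) : cst (Δ i j) ∣ rename (Function.update id i j) (rhoTerm Δ n σ) := by
  have hfactor : rename (Function.update id i j) (pairFactor Δ σ i j) =
      cst (Δ i j) * (if σ i < σ j then zmon j 1 else -zmon j 1) := by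
    rcases (σ.injective.ne hij.ne).lt_or_gt with h | h
    · simp [pairFactor, h, rename_zmon, rename_cst, hij.ne']
    · simp [pairFactor, h, h.not_gt, rename_zmon, rename_cst, hij.ne']
  unfold rhoTerm
  simp only [map_mul, map_prod]
  refine Dvd.dvd.mul_left (dvd_trans ?_ (dvd_prod_of_mem _ (mem_univ i))) _
  exact (Dvd.intro _ hfactor.symm).trans (dvd_prod_of_mem _ (mem_Ioi.mpr hij))

section Action

variable [MulSemiringAction (Equiv.Perm (Fin k)) A]

def actCoeffs (s : Equiv.Perm (Fin k)) : 𝓛 →+* 𝓛 :=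
  mapRingHom _ (MulSemiringAction.toRingHom _ A s)

lemma actCoeffs_zmon (s : Equiv.Perm (Fin k)) (l : Fin k) (m : ℤ) :
    actCoeffs s (zmon l m : 𝓛) = zmon l m := by
  simp [actCoeffs, zmon]

lemma actCoeffs_cst (s : Equiv.Perm (Fin k)) (c : A) :
    actCoeffs s (cst c : 𝓛) = cst (s • c) := by
  simp [actCoeffs, cst]

lemma actCoeffs_cst_mul {s : Equiv.Perm (Fin k)} {d : A} (hd : s • d = d)
    (hann : ∀ x : A, d * (x - s • x) = 0) (W : 𝓛) :
    actCoeffs s (cst d * W) = cst d * W := by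
  rw [map_mul, actCoeffs_cst, hd, ← sub_eq_zero, ← mul_sub, ← neg_sub, mul_neg, neg_eq_zero]
  ext x
  simpa [actCoeffs, cst, coeff_single_mul_apply] using hann (W.coeff x)

lemma rename_pairFactor_mul_swap (Δ : Fin k → Fin k → A)
    (hΔact : ∀ (σ : Equiv.Perm (Fin k)) (i j : Fin k), i ≠ j → σ • Δ i j = Δ (σ i) (σ j))
    (σ : Equiv.Perm (Fin k)) (i j a b : Fin k) :
    rename (Function.update id i j)
        (pairFactor Δ (σ * Equiv.swap i j) (Equiv.swap i j a) (Equiv.swap i j b)) =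
      actCoeffs (Equiv.swap i j) (rename (Function.update id i j) (pairFactor Δ σ a b)) := by
  rcases eq_or_ne a b with rfl | hab
  · simp [pairFactor]
  unfold pairFactor
  simp only [Equiv.Perm.mul_apply, Equiv.swap_apply_self, ← hΔact _ a b hab]
  split_ifs <;>
    simp only [map_add, map_sub, map_mul, map_zero, rename_zmon, rename_cst, actCoeffs_zmon,
      actCoeffs_cst, update_id_swap]

lemma rename_rhoTerm_mul_swap (Δ : Fin k → Fin k → A)
    (hΔsym : ∀ i j : Fin k, i ≠ j → Δ i j = Δ j i)
    (hΔact : ∀ (σ : Equiv.Perm (Fin k)) (i j : Fin k), i ≠ j → σ • Δ i j = Δ (σ i) (σ j))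
    (n : Fin k → ℤ) (σ : Equiv.Perm (Fin k)) {i j : Fin k} (hij : i ≠ j) :
    rename (Function.update id i j) (rhoTerm Δ n (σ * Equiv.swap i j)) =
      -actCoeffs (Equiv.swap i j) (rename (Function.update id i j) (rhoTerm Δ n σ)) := by
  have hmon : ∏ l, (zmon (Function.update id i j l) (n ((σ * Equiv.swap i j) l)) : 𝓛) =
      ∏ l, zmon (Function.update id i j l) (n (σ l)) :=
    Fintype.prod_equiv (Equiv.swap i j) _ _ fun l => by rw [update_id_swap, Equiv.Perm.mul_apply]
  have hpairs := (Equiv.swap i j).prod_Ioi_comp_eq_sign_mul_prod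
    (f := fun a b => rename (Function.update id i j) (pairFactor Δ (σ * Equiv.swap i j) a b))
    fun a b => by rw [pairFactor_swap Δ hΔsym, map_neg]
  simp only [rename_pairFactor_mul_swap Δ hΔact, Equiv.Perm.sign_swap hij] at hpairs
  unfold rhoTerm
  simp only [map_mul, map_prod, rename_zmon, actCoeffs_zmon, hmon] at hpairs ⊢
  rw [hpairs]
  simp

theorem rename_rhoCurve_eq_zero (Δ : Fin k → Fin k → A)
    (hΔsym : ∀ i j : Fin k, i ≠ j → Δ i j = Δ j i)
    (hΔact : ∀ (σ : Equiv.Perm (Fin k)) (i j : Fin k), i ≠ j → σ • Δ i j = Δ (σ i) (σ j))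
    (hann : ∀ i j : Fin k, i ≠ j → ∀ x : A, Δ i j * (x - Equiv.swap i j • x) = 0)
    (n : Fin k → ℤ) {i j : Fin k} (hij : i < j) :
    rename (Function.update id i j) (rhoCurve Δ n) = 0 := by
  have hinv : Equiv.swap i j • Δ i j = Δ i j := by
    rw [hΔact _ _ _ hij.ne, Equiv.swap_apply_left, Equiv.swap_apply_right, hΔsym j i hij.ne']
  rw [rhoCurve_eq_sum_rhoTerm, map_sum]
  refine sum_ninvolution (· * Equiv.swap i j) (fun σ => ?_)
    (fun σ _ h => hij.ne (Equiv.swap_eq_one_iff.mp (mul_eq_left.mp h))) (fun _ => mem_univ _)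
    (Equiv.mul_swap_mul_self i j)
  obtain ⟨W, hW⟩ := cst_dvd_rename_rhoTerm Δ n σ hij
  rw [rename_rhoTerm_mul_swap Δ hΔsym hΔact n σ hij.ne, hW,
    actCoeffs_cst_mul hinv (hann i j hij.ne), add_neg_cancel]

end Action

end LaurentVandermonde

theorem statement2_general {k : ℕ} (A : Type*) [CommRing A]
    [MulSemiringAction (Equiv.Perm (Fin k)) A]
    (Δ : Fin k → Fin k → A)
    (hΔsym : ∀ i j : Fin k, i ≠ j → Δ i j = Δ j i)
    (hΔact : ∀ (σ : Equiv.Perm (Fin k)) (i j : Fin k), i ≠ j →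
      σ • Δ i j = Δ (σ i) (σ j))
    (hann : ∀ i j : Fin k, i ≠ j → ∀ x : A, Δ i j * (x - Equiv.swap i j • x) = 0)
    (n : Fin k → ℤ) :
    (∏ p ∈ Finset.univ.filter (fun p : Fin k × Fin k => p.1 < p.2),
        (zmon p.2 1 - zmon p.1 1)) ∣ rhoCurve Δ n :=
  prod_dvd_of_rename_eq_zero _ (fun _ hp => (mem_filter.mp hp).2) _ fun _ hp =>
    rename_rhoCurve_eq_zero Δ hΔsym hΔact hann n (mem_filter.mp hp).2

theorem statement2 {k : ℕ} (hk : 2 ≤ k) (A : Type*) [CommRing A]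
    [MulSemiringAction (Equiv.Perm (Fin k)) A]
    (Δ : Fin k → Fin k → A)
    (hΔsym : ∀ i j : Fin k, i ≠ j → Δ i j = Δ j i)
    (hΔact : ∀ (σ : Equiv.Perm (Fin k)) (i j : Fin k), i ≠ j →
      σ • Δ i j = Δ (σ i) (σ j))
    (hann : ∀ i j : Fin k, i ≠ j → ∀ x : A, Δ i j * (x - Equiv.swap i j • x) = 0)
    (n : Fin k → ℤ) :
    (∏ p ∈ Finset.univ.filter (fun p : Fin k × Fin k => p.1 < p.2),
        (zmon p.2 1 - zmon p.1 1)) ∣ rhoCurve Δ n :=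
  statement2_general A Δ hΔsym hΔact hann n
end
end

section
/- Let K = ℚ(a, b) with q := a·b, let k ≥ 1 and n_1, ..., n_k ∈ ℤ, and set ζ(x) := (1 − xa)(1 − xb) / ( (1 − x)(1 − xq) ). Then the symmetrization Σ_{σ ∈ S(k)} z_{σ(1)}^{n_1} ⋯ z_{σ(k)}^{n_k} · Π_{1 ≤ i < j ≤ k} ζ( z_{σ(i)} / z_{σ(j)} ), an element of K(z_1,...,z_k), can be written in the form r(z_1,...,z_k) / Π_{1 ≤ i ≠ j ≤ k} (z_i − q·z_j) with r a Laurent polynomial in z_1,...,z_k over K; in other words, the a priori simple poles along z_i = z_j cancel after symmetrization, and only poles along z_i = q·z_j remain. (This is the specialization of Proposition 'elements of the small universal shuffle algebra have the form r/Π(z_i − z_j q_j)' to the surface S = 𝔸^2, where Δ_{ij} ↦ (1−a)(1−b) and q_i ↦ q = ab.) -/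
/-!
STATEMENT 6: For the 𝔸²-specialization ζ(x) = (1−xa)(1−xb)/((1−x)(1−xq)),
q = ab, the symmetrization
`Σ_{σ ∈ S(k)} z_{σ(1)}^{n_1} ⋯ z_{σ(k)}^{n_k} Π_{i<j} ζ(z_{σ(i)}/z_{σ(j)})`
can be written as `r / Π_{i ≠ j} (z_i − q z_j)` with `r` a Laurent polynomial
over K = ℚ(a,b): its only poles are along `z_i = q z_j`.
-/

set_option synthInstance.maxHeartbeats 1000000
set_option maxHeartbeats 1000000

noncomputable section

open Finset

/-- The field K = ℚ(a, b). -/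
abbrev Kab : Type := FractionRing (MvPolynomial (Fin 2) ℚ)

/-- The field K(z₁,...,z_k). -/
abbrev KField (k : ℕ) : Type := FractionRing (MvPolynomial (Fin k) Kab)

/-- The transcendental `a`. -/
def aV (k : ℕ) : KField k :=
  algebraMap (MvPolynomial (Fin k) Kab) (KField k)
    (MvPolynomial.C (algebraMap (MvPolynomial (Fin 2) ℚ) Kab (MvPolynomial.X 0)))

/-- The transcendental `b`. -/
def bV (k : ℕ) : KField k :=
  algebraMap (MvPolynomial (Fin k) Kab) (KField k)
    (MvPolynomial.C (algebraMap (MvPolynomial (Fin 2) ℚ) Kab (MvPolynomial.X 1)))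

/-- `q = a·b`. -/
def qV (k : ℕ) : KField k := aV k * bV k

/-- The variables `z_i`. -/
def zV {k : ℕ} (i : Fin k) : KField k :=
  algebraMap (MvPolynomial (Fin k) Kab) (KField k) (MvPolynomial.X i)

/-- `ζ(x) = (1 − xa)(1 − xb) / ((1 − x)(1 − xq))`. -/
def zetaA2 {k : ℕ} (x : KField k) : KField k :=
  ((1 - x * aV k) * (1 - x * bV k)) / ((1 - x) * (1 - x * qV k))

/-!
Multiply the symmetrization by the Vandermonde product `V = ∏_{i<j} (z_j - z_i)`, by the target
denominator `D = ∏_{i≠j} (z_i - q z_j)` and by a symmetric monomial `M`. Since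
`ζ(z_i/z_j) (z_j - z_i) (z_j - q z_i) = (z_j - a z_i) (z_j - b z_i)`, the `σ = 1` summand times
`V D M` is a polynomial `g`. The `σ`-summand is the image of the `σ = 1` one under `z_i ↦ z_{σ i}`,
`V` is alternating and `D`, `M` are symmetric, so the whole product is the alternant
`∑_σ sign σ · σ(g)`. The alternant changes sign under each transposition `z_i ↔ z_j`, so it is
divisible by each of the pairwise non-associated primes `z_j - z_i`, hence by `V`. Cancelling `V`
leaves a polynomial divided by `M D`.
-/

open MvPolynomial Equiv

section PairProducts

variable {M : Type*} [CommMonoid M] {k : ℕ}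

theorem prod_lt_pairs_eq_prod_prod_Ioi (f : Fin k → Fin k → M) :
    ∏ p ∈ univ.filter (fun p : Fin k × Fin k => p.1 < p.2), f p.1 p.2
      = ∏ i : Fin k, ∏ j ∈ Ioi i, f i j := by
  rw [prod_sigma']
  exact prod_nbij' (fun p => ⟨p.1, p.2⟩) (fun x => (x.1, x.2))
    (by simp) (by simp) (by simp) (by simp) (by simp)

theorem prod_ne_pairs_eq_mul_swap (f : Fin k → Fin k → M) :
    ∏ p ∈ univ.filter (fun p : Fin k × Fin k => p.1 ≠ p.2), f p.1 p.2
      = (∏ p ∈ univ.filter (fun p : Fin k × Fin k => p.1 < p.2), f p.1 p.2) *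
        ∏ p ∈ univ.filter (fun p : Fin k × Fin k => p.1 < p.2), f p.2 p.1 := by
  have hsplit : univ.filter (fun p : Fin k × Fin k => p.1 ≠ p.2)
      = univ.filter (fun p : Fin k × Fin k => p.1 < p.2)
        ∪ univ.filter (fun p : Fin k × Fin k => p.2 < p.1) := by
    ext p
    simp [lt_or_lt_iff_ne]
  rw [hsplit, prod_union (disjoint_filter.mpr fun p _ h => h.asymm)]
  congr 1
  exact prod_nbij' Prod.swap Prod.swap (by simp) (by simp) (by simp) (by simp) (by simp)

theorem prod_ne_pairs_comp_perm {α : Type*} [Fintype α] [DecidableEq α] (f : α → α → M)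
    (σ : Perm α) :
    ∏ p ∈ univ.filter (fun p : α × α => p.1 ≠ p.2), f (σ p.1) (σ p.2)
      = ∏ p ∈ univ.filter (fun p : α × α => p.1 ≠ p.2), f p.1 p.2 :=
  prod_equiv (σ.prodCongr σ) (by simp) (by simp)

end PairProducts

theorem prod_lt_pairs_sub_comp_perm {R : Type*} [CommRing R] {k : ℕ} (v : Fin k → R)
    (σ : Perm (Fin k)) :
    ∏ p ∈ univ.filter (fun p : Fin k × Fin k => p.1 < p.2), (v (σ p.2) - v (σ p.1))
      = (Perm.sign σ : ℤ) * ∏ p ∈ univ.filter (fun p : Fin k × Fin k => p.1 < p.2),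
          (v p.2 - v p.1) := by
  rw [prod_lt_pairs_eq_prod_prod_Ioi (fun i j => v (σ j) - v (σ i)),
    prod_lt_pairs_eq_prod_prod_Ioi (fun i j => v j - v i),
    ← Matrix.det_vandermonde, ← Matrix.det_vandermonde, ← Matrix.det_permute]
  rfl

namespace MvPolynomial

variable {R σ : Type*}

theorem prime_X_sub_X [CommRing R] [IsDomain R] {i j : σ} (h : i ≠ j) :
    Prime (X i - X j : MvPolynomial σ R) := by
  classical
  let e : MvPolynomial σ R ≃ₐ[R] Polynomial (MvPolynomial {l : σ // l ≠ i} R) :=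
    (renameEquiv R (optionSubtypeNe i).symm).trans (optionEquivLeft R _)
  have he : e (X i - X j) = Polynomial.X - Polynomial.C (X ⟨j, h.symm⟩) := by
    simp [e, optionSubtypeNe_symm_of_ne h.symm]
  rw [← MulEquiv.prime_iff e.toMulEquiv]
  exact he ▸ Polynomial.prime_X_sub_C _

theorem X_sub_X_dvd_sub_rename_swap [CommRing R] [DecidableEq σ] (i j : σ)
    (p : MvPolynomial σ R) : X i - X j ∣ p - rename (swap i j) p := by
  induction p using MvPolynomial.induction_on with
  | C a => simp
  | add p q hp hq => simpa [add_sub_add_comm] using dvd_add hp hq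
  | mul_X p l hp =>
    have hX : X i - X j ∣ (X l - X (swap i j l) : MvPolynomial σ R) := by
      rcases eq_or_ne l i with rfl | hli
      · simp
      rcases eq_or_ne l j with rfl | hlj
      · rw [swap_apply_right, ← neg_sub]
        exact (dvd_refl (X l - X i : MvPolynomial σ R)).neg_left
      · simp [swap_apply_of_ne_of_ne hli hlj]
    have : p * X l - rename (swap i j) (p * X l)
        = (p - rename (swap i j) p) * X l + rename (swap i j) p * (X l - X (swap i j l)) := by
      simp only [map_mul, rename_X]; ring
    rw [this]
    exact dvd_add (dvd_mul_of_dvd_left hp _) (dvd_mul_of_dvd_right hX _)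

theorem X_sub_X_dvd_of_rename_swap_eq_neg {K : Type*} [Field K] [NeZero (2 : K)]
    [DecidableEq σ] {i j : σ} {p : MvPolynomial σ K} (hp : rename (swap i j) p = -p) :
    X i - X j ∣ p := by
  have h2 : IsUnit (2 : MvPolynomial σ K) := by
    simpa only [map_ofNat] using (NeZero.ne (2 : K)).isUnit.map (C : K →+* MvPolynomial σ K)
  have := X_sub_X_dvd_sub_rename_swap i j p
  rw [hp, sub_neg_eq_add, ← two_mul] at this
  exact h2.dvd_mul_left.mp this

theorem not_X_sub_X_dvd [CommRing R] [Nontrivial R] {i j l m : σ} (hlm : l ≠ m)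
    (hli : l ≠ i) (hlj : l ≠ j) : ¬ (X i - X j : MvPolynomial σ R) ∣ X l - X m := by
  classical
  intro hdvd
  have := map_dvd (eval (Pi.single l 1)) hdvd
  simp [hli.symm, hlj.symm, hlm.symm] at this

theorem isRelPrime_X_sub_X [CommRing R] [IsDomain R] {i j l m : σ} (hij : i ≠ j) (hlm : l ≠ m)
    (h : ¬ (l = i ∧ m = j)) (h' : ¬ (l = j ∧ m = i)) :
    IsRelPrime (X i - X j : MvPolynomial σ R) (X l - X m) := by
  rw [(prime_X_sub_X hij).irreducible.isRelPrime_iff_not_dvd]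
  by_cases hl : l = i ∨ l = j
  · have hmi : m ≠ i := by grind
    have hmj : m ≠ j := by grind
    rw [← neg_sub (X m) (X l), dvd_neg]
    exact not_X_sub_X_dvd hlm.symm hmi hmj
  · simp only [not_or] at hl
    exact not_X_sub_X_dvd hlm hl.1 hl.2

theorem prod_lt_pairs_X_sub_X_dvd {K : Type*} [Field K] [NeZero (2 : K)] {k : ℕ}
    {p : MvPolynomial (Fin k) K} (hp : ∀ i j : Fin k, i ≠ j → rename (swap i j) p = -p) :
    ∏ q ∈ univ.filter (fun q : Fin k × Fin k => q.1 < q.2), (X q.2 - X q.1) ∣ p := by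
  refine prod_dvd_of_isRelPrime ?_ fun q hq => X_sub_X_dvd_of_rename_swap_eq_neg (hp _ _ ?_)
  · intro q hq r hr hqr
    rw [mem_coe, mem_filter] at hq hr
    refine isRelPrime_X_sub_X hq.2.ne' hr.2.ne' (fun h => hqr (Prod.ext h.2.symm h.1.symm)) ?_
    rintro ⟨h₂, h₁⟩
    exact lt_asymm (h₁ ▸ h₂ ▸ hr.2) hq.2
  · exact (mem_filter.mp hq).2.ne'

section Alternant

variable [CommRing R] [Fintype σ] [DecidableEq σ]

def alternant (p : MvPolynomial σ R) : MvPolynomial σ R :=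
  ∑ τ : Perm σ, (Perm.sign τ : ℤ) • rename τ p

theorem rename_alternant (π : Perm σ) (p : MvPolynomial σ R) :
    rename π (alternant p) = (Perm.sign π : ℤ) • alternant p := by
  simp only [alternant, map_sum, map_zsmul, rename_rename, smul_sum]
  refine Fintype.sum_equiv (Equiv.mulLeft π) _ _ fun τ => ?_
  rw [coe_mulLeft, Perm.sign_mul, Units.val_mul, smul_smul, ← mul_assoc, ← Units.val_mul,
    Int.units_mul_self, Units.val_one, one_mul, Perm.coe_mul]

theorem rename_swap_alternant {i j : σ} (h : i ≠ j) (p : MvPolynomial σ R) :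
    rename (swap i j) (alternant p) = -alternant p := by
  simp [rename_alternant, Perm.sign_swap h]

end Alternant

end MvPolynomial

section RationalFunctions

variable {k : ℕ}

local notation "ι" => algebraMap (MvPolynomial (Fin k) Kab) (KField k)

theorem algebraMap_kField_injective : Function.Injective ι :=
  IsFractionRing.injective _ _

theorem zV_mem_range (i : Fin k) : zV i ∈ (ι).range :=
  ⟨X i, rfl⟩

theorem aV_mem_range : aV k ∈ (ι).range :=
  ⟨_, rfl⟩

theorem bV_mem_range : bV k ∈ (ι).range :=
  ⟨_, rfl⟩

theorem zV_ne_zero (i : Fin k) : zV i ≠ 0 :=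
  (map_ne_zero_iff _ algebraMap_kField_injective).mpr (X_ne_zero i)

theorem zV_sub_zV_ne_zero {i j : Fin k} (h : i ≠ j) : zV i - zV j ≠ 0 := by
  rw [zV, zV, ← map_sub]
  exact (map_ne_zero_iff _ algebraMap_kField_injective).mpr (prime_X_sub_X h).ne_zero

theorem zV_sub_qV_mul_zV_ne_zero {i j : Fin k} (h : i ≠ j) : zV i - qV k * zV j ≠ 0 := by
  classical
  obtain ⟨c, hc⟩ : ∃ c : Kab, qV k = ι (C c) := ⟨_, by rw [qV, aV, bV, ← map_mul, ← map_mul]⟩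
  rw [hc, zV, zV, ← map_mul, ← map_sub, map_ne_zero_iff _ algebraMap_kField_injective]
  intro h0
  simpa [h.symm] using congr_arg (eval (Pi.single i 1)) h0

theorem zetaA2_div_mul {i j : Fin k} (h : i ≠ j) :
    zetaA2 (zV i / zV j) * ((zV j - zV i) * (zV j - qV k * zV i))
      = (zV j - aV k * zV i) * (zV j - bV k * zV i) := by
  have hj := zV_ne_zero j
  have h₁ := zV_sub_zV_ne_zero h.symm
  have h₂ : zV j - zV i * qV k ≠ 0 := mul_comm (zV i) _ ▸ zV_sub_qV_mul_zV_ne_zero h.symm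
  rw [zetaA2]
  field_simp

theorem prod_zpow_mul_prod_pow_mem_range (n : Fin k → ℤ) (N : ℕ) (hN : ∀ i, 0 ≤ n i + N) :
    (∏ i, zV i ^ n i) * ∏ i, zV i ^ N ∈ (ι).range := by
  rw [← prod_mul_distrib]
  refine prod_mem fun i _ => ?_
  have : zV i ^ n i * zV i ^ N = zV i ^ (n i + N).toNat := by
    rw [← zpow_natCast, ← zpow_natCast, ← zpow_add₀ (zV_ne_zero i), Int.toNat_of_nonneg (hN i)]
  exact this ▸ pow_mem (zV_mem_range i) _

theorem prod_zetaA2_mul_mem_range :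
    (∏ p ∈ univ.filter (fun p : Fin k × Fin k => p.1 < p.2), zetaA2 (zV p.1 / zV p.2)) *
        (∏ p ∈ univ.filter (fun p : Fin k × Fin k => p.1 < p.2), (zV p.2 - zV p.1)) *
        ∏ p ∈ univ.filter (fun p : Fin k × Fin k => p.1 ≠ p.2), (zV p.1 - qV k * zV p.2)
      ∈ (ι).range := by
  have hζ : ((∏ p ∈ univ.filter (fun p : Fin k × Fin k => p.1 < p.2), zetaA2 (zV p.1 / zV p.2)) *
        ∏ p ∈ univ.filter (fun p : Fin k × Fin k => p.1 < p.2), (zV p.2 - zV p.1)) *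
      ((∏ p ∈ univ.filter (fun p : Fin k × Fin k => p.1 < p.2), (zV p.1 - qV k * zV p.2)) *
        ∏ p ∈ univ.filter (fun p : Fin k × Fin k => p.1 < p.2), (zV p.2 - qV k * zV p.1))
      = (∏ p ∈ univ.filter (fun p : Fin k × Fin k => p.1 < p.2),
            (zV p.2 - aV k * zV p.1) * (zV p.2 - bV k * zV p.1)) *
          ∏ p ∈ univ.filter (fun p : Fin k × Fin k => p.1 < p.2), (zV p.1 - qV k * zV p.2) := by
    rw [← prod_congr rfl fun p hp => zetaA2_div_mul (mem_filter.mp hp).2.ne,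
      prod_mul_distrib, prod_mul_distrib]
    ring
  have hq : qV k ∈ (ι).range := mul_mem aV_mem_range bV_mem_range
  rw [prod_ne_pairs_eq_mul_swap (fun i j => zV i - qV k * zV j), hζ]
  exact mul_mem
    (prod_mem fun p _ => mul_mem (sub_mem (zV_mem_range _) (mul_mem aV_mem_range (zV_mem_range _)))
      (sub_mem (zV_mem_range _) (mul_mem bV_mem_range (zV_mem_range _))))
    (prod_mem fun p _ => sub_mem (zV_mem_range _) (mul_mem hq (zV_mem_range _)))

def wheelTerm (n : Fin k → ℤ) : KField k :=
  (∏ i, zV i ^ n i) *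
    ∏ p ∈ univ.filter (fun p : Fin k × Fin k => p.1 < p.2), zetaA2 (zV p.1 / zV p.2)

theorem wheelTerm_mul_mem_range (n : Fin k → ℤ) (N : ℕ) (hN : ∀ i, 0 ≤ n i + N) :
    wheelTerm n * (∏ p ∈ univ.filter (fun p : Fin k × Fin k => p.1 < p.2), (zV p.2 - zV p.1)) *
        ((∏ p ∈ univ.filter (fun p : Fin k × Fin k => p.1 ≠ p.2), (zV p.1 - qV k * zV p.2)) *
          ∏ i, zV i ^ N)
      ∈ (ι).range := by
  convert mul_mem (prod_zpow_mul_prod_pow_mem_range n N hN) prod_zetaA2_mul_mem_range using 1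
  rw [wheelTerm]
  ring

def permHom (σ : Perm (Fin k)) : KField k →+* KField k :=
  IsFractionRing.lift (g := (ι).comp (rename (R := Kab) σ).toRingHom)
    (algebraMap_kField_injective.comp (rename_injective _ σ.injective))

theorem permHom_algebraMap (σ : Perm (Fin k)) (p : MvPolynomial (Fin k) Kab) :
    permHom σ (ι p) = ι (rename σ p) :=
  IsFractionRing.lift_algebraMap _ _

theorem permHom_zV (σ : Perm (Fin k)) (i : Fin k) : permHom σ (zV i) = zV (σ i) := by
  rw [zV, permHom_algebraMap, rename_X, zV]

theorem permHom_aV (σ : Perm (Fin k)) : permHom σ (aV k) = aV k := by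
  rw [aV, permHom_algebraMap, rename_C]

theorem permHom_bV (σ : Perm (Fin k)) : permHom σ (bV k) = bV k := by
  rw [bV, permHom_algebraMap, rename_C]

theorem permHom_qV (σ : Perm (Fin k)) : permHom σ (qV k) = qV k := by
  rw [qV, map_mul, permHom_aV, permHom_bV]

theorem permHom_zetaA2 (σ : Perm (Fin k)) (x : KField k) :
    permHom σ (zetaA2 x) = zetaA2 (permHom σ x) := by
  simp only [zetaA2, map_div₀, map_mul, map_sub, map_one, permHom_aV, permHom_bV, permHom_qV]

theorem permHom_wheelTerm (σ : Perm (Fin k)) (n : Fin k → ℤ) :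
    permHom σ (wheelTerm n) = (∏ i, zV (σ i) ^ n i) *
      ∏ p ∈ univ.filter (fun p : Fin k × Fin k => p.1 < p.2), zetaA2 (zV (σ p.1) / zV (σ p.2)) := by
  simp only [wheelTerm, map_mul, map_prod, map_zpow₀, permHom_zetaA2, map_div₀, permHom_zV]

theorem permHom_prod_lt_pairs_sub (σ : Perm (Fin k)) :
    permHom σ (∏ p ∈ univ.filter (fun p : Fin k × Fin k => p.1 < p.2), (zV p.2 - zV p.1))
      = (Perm.sign σ : ℤ) * ∏ p ∈ univ.filter (fun p : Fin k × Fin k => p.1 < p.2),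
          (zV p.2 - zV p.1) := by
  simp only [map_prod, map_sub, permHom_zV]
  exact prod_lt_pairs_sub_comp_perm zV σ

theorem permHom_prod_ne_pairs (σ : Perm (Fin k)) :
    permHom σ (∏ p ∈ univ.filter (fun p : Fin k × Fin k => p.1 ≠ p.2), (zV p.1 - qV k * zV p.2))
      = ∏ p ∈ univ.filter (fun p : Fin k × Fin k => p.1 ≠ p.2), (zV p.1 - qV k * zV p.2) := by
  simp only [map_prod, map_sub, map_mul, permHom_qV, permHom_zV]
  exact prod_ne_pairs_comp_perm (fun i j => zV i - qV k * zV j) σ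

theorem permHom_prod_pow (σ : Perm (Fin k)) (N : ℕ) :
    permHom σ (∏ i, zV i ^ N) = ∏ i, zV i ^ N := by
  simp only [map_prod, map_pow, permHom_zV]
  exact Equiv.prod_comp σ fun i => zV i ^ N

theorem sum_permHom_mul_eq_alternant {F W Y : KField k} {g : MvPolynomial (Fin k) Kab}
    (hW : ∀ σ, permHom σ W = (Perm.sign σ : ℤ) * W) (hY : ∀ σ, permHom σ Y = Y)
    (hg : F * W * Y = ι g) :
    (∑ σ : Perm (Fin k), permHom σ F) * W * Y = ι (alternant g) := by
  rw [alternant, map_sum, sum_mul, sum_mul]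
  refine sum_congr rfl fun σ _ => ?_
  have hsign : ((Perm.sign σ : ℤ) : KField k) * (Perm.sign σ : ℤ) = 1 := by
    rw [← Int.cast_mul, ← Units.val_mul, Int.units_mul_self, Units.val_one, Int.cast_one]
  rw [map_zsmul, zsmul_eq_mul, ← permHom_algebraMap, ← hg, map_mul, map_mul, hW, hY]
  linear_combination (-(permHom σ F * W * Y)) * hsign

def IsLaurentPoly (x : KField k) : Prop :=
  ∃ (s : Finset (Fin k →₀ ℤ)) (c : (Fin k →₀ ℤ) → Kab),
    x = ∑ m ∈ s, ι (C (c m)) * ∏ i : Fin k, zV i ^ (m i)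

theorem isLaurentPoly_algebraMap (p : MvPolynomial (Fin k) Kab) : IsLaurentPoly (ι p) := by
  refine ⟨p.support.map ⟨Finsupp.mapRange (↑) Nat.cast_zero,
      Finsupp.mapRange_injective _ _ Nat.cast_injective⟩,
    fun m => coeff (m.mapRange Int.toNat Int.toNat_zero) p, ?_⟩
  conv_lhs => rw [p.as_sum]
  rw [map_sum, sum_map]
  have hcast : (Int.toNat ∘ Nat.cast : ℕ → ℕ) = id := funext Int.toNat_natCast
  refine sum_congr rfl fun m _ => ?_
  simp [monomial_eq, Finsupp.prod_fintype, zV, hcast]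

theorem IsLaurentPoly.mul_prod_zpow {x : KField k} (hx : IsLaurentPoly x) (e : Fin k → ℤ) :
    IsLaurentPoly (x * ∏ i, zV i ^ e i) := by
  obtain ⟨s, c, rfl⟩ := hx
  let E : Fin k →₀ ℤ := Finsupp.equivFunOnFinite.symm e
  refine ⟨s.map (addRightEmbedding E), fun m => c (m - E), ?_⟩
  rw [sum_mul, sum_map]
  refine sum_congr rfl fun m _ => ?_
  simp [E, zpow_add₀ (zV_ne_zero _), prod_mul_distrib, mul_assoc]

theorem IsLaurentPoly.div_prod_pow {x : KField k} (hx : IsLaurentPoly x) (N : ℕ) :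
    IsLaurentPoly (x / ∏ i, zV i ^ N) := by
  convert hx.mul_prod_zpow fun _ => -(N : ℤ) using 1
  simp [div_eq_mul_inv, prod_inv_distrib]

end RationalFunctions

theorem statement6_general (k : ℕ) (n : Fin k → ℤ) :
    ∃ (s : Finset (Fin k →₀ ℤ)) (c : (Fin k →₀ ℤ) → Kab),
      ∑ σ : Equiv.Perm (Fin k),
        (∏ i : Fin k, zV (σ i) ^ n i) *
          ∏ p ∈ Finset.univ.filter (fun p : Fin k × Fin k => p.1 < p.2),
            zetaA2 (zV (σ p.1) / zV (σ p.2))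
      = (∑ m ∈ s, algebraMap (MvPolynomial (Fin k) Kab) (KField k)
            (MvPolynomial.C (c m)) * ∏ i : Fin k, zV i ^ (m i)) /
          ∏ p ∈ Finset.univ.filter (fun p : Fin k × Fin k => p.1 ≠ p.2),
            (zV p.1 - qV k * zV p.2) := by
  obtain ⟨N, hN⟩ : ∃ N : ℕ, ∀ i, 0 ≤ n i + N :=
    ⟨∑ j, (n j).natAbs, fun i => by
      have := single_le_sum (f := fun j => (n j).natAbs) (fun _ _ => Nat.zero_le _) (mem_univ i)
      omega⟩
  set V := ∏ p ∈ univ.filter (fun p : Fin k × Fin k => p.1 < p.2), (zV p.2 - zV p.1)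
  set D := ∏ p ∈ univ.filter (fun p : Fin k × Fin k => p.1 ≠ p.2), (zV p.1 - qV k * zV p.2)
  set M := ∏ i : Fin k, zV i ^ N
  obtain ⟨g, hg⟩ := wheelTerm_mul_mem_range n N hN
  have hsum := sum_permHom_mul_eq_alternant permHom_prod_lt_pairs_sub
    (fun σ => by rw [map_mul, permHom_prod_ne_pairs, permHom_prod_pow]) hg.symm
  obtain ⟨h, hh⟩ := prod_lt_pairs_X_sub_X_dvd fun i j hij => rename_swap_alternant hij g
  have hV : V ≠ 0 := prod_ne_zero_iff.mpr fun p hp => zV_sub_zV_ne_zero (mem_filter.mp hp).2.ne'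
  have hD : D ≠ 0 :=
    prod_ne_zero_iff.mpr fun p hp => zV_sub_qV_mul_zV_ne_zero (mem_filter.mp hp).2
  have hM : M ≠ 0 := prod_ne_zero_iff.mpr fun i _ => pow_ne_zero _ (zV_ne_zero i)
  have hcleared : (∑ σ, permHom σ (wheelTerm n)) * (D * M) = algebraMap _ (KField k) h := by
    refine mul_left_cancel₀ hV ?_
    rw [← mul_assoc, mul_comm V, hsum, hh, map_mul]
    simp [V, zV]
  obtain ⟨s, c, hsc⟩ := (isLaurentPoly_algebraMap h).div_prod_pow N
  refine ⟨s, c, ?_⟩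
  simp only [← permHom_wheelTerm]
  rw [← hsc, div_div, eq_div_iff (mul_ne_zero hM hD), ← hcleared]
  ring

theorem statement6 (k : ℕ) (hk : 1 ≤ k) (n : Fin k → ℤ) :
    ∃ (s : Finset (Fin k →₀ ℤ)) (c : (Fin k →₀ ℤ) → Kab),
      ∑ σ : Equiv.Perm (Fin k),
        (∏ i : Fin k, zV (σ i) ^ n i) *
          ∏ p ∈ Finset.univ.filter (fun p : Fin k × Fin k => p.1 < p.2),
            zetaA2 (zV (σ p.1) / zV (σ p.2))
      = (∑ m ∈ s, algebraMap (MvPolynomial (Fin k) Kab) (KField k)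
            (MvPolynomial.C (c m)) * ∏ i : Fin k, zV i ^ (m i)) /
          ∏ p ∈ Finset.univ.filter (fun p : Fin k × Fin k => p.1 ≠ p.2),
            (zV p.1 - qV k * zV p.2) :=
  statement6_general k n
end
end
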